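/- arXiv:2401.14162 — 4 statements merged into one kernel-verified Lean document; each statement's English description precedes it below -/
import Mathlib

section
/- Let B be a right double Ore extension of R with σ₁₂ = 0, σ₂₁ = 0 and σ₁₁∘δ₁ = −δ₁∘σ₁₁. Let a₂ be a unit of R and a₀, c ∈ R, and set q₁ = a₂y₁² + a₀ and q₂ = c. Define σ'₁₁(r) = a₂σ₁₁(σ₁₁(r))a₂⁻¹, σ'₁₂ = σ'₂₁ = 0, let σ'₂₂ : R → R be any map, and define δ'₁(r) = a₂δ₁(δ₁(r)) + a₀r − σ'₁₁(r)a₀ and δ'₂(r) = cr − σ'₂₂(r)c. Then (q₁, q₂) is a dcv-matrix with respect to (σ', δ') for the parameters p'₁₂ = p'₁₁ = 0, τ'₁ = c, τ'₂ = τ'₀ = 0; explicitly, q₂q₁ = cq₁, and for every r ∈ R, q₁r = σ'₁₁(r)q₁ + δ'₁(r) and q₂r = σ'₂₂(r)q₂ + δ'₂(r). -/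
/-- A right double Ore extension of a `k`-algebra `R` inside a `k`-algebra `B`
(Zhang–Zhang / Carvalho et al.).  `ι : R →ₐ[k] B` is the inclusion of the
coefficient algebra, `y1 y2` are the two new indeterminates, `p12 p11` the
parameter, `t0 t1 t2` the tail, `s11 … s22` the entries of the algebra
homomorphism `σ : R → M₂(R)` and `d1 d2` the entries of the `σ`-derivation
`δ : R → M_{2×1}(R)`. -/
structure RightDoubleOre (k R B : Type*) [Field k] [Ring R] [Algebra k R]
    [Ring B] [Algebra k B] where
  ι : R →ₐ[k] B
  inj : Function.Injective ι
  y1 : B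
  y2 : B
  p12 : k
  p11 : k
  t0 : R
  t1 : R
  t2 : R
  s11 : R → R
  s12 : R → R
  s21 : R → R
  s22 : R → R
  d1 : R → R
  d2 : R → R
  /-- `B` is generated by (the image of) `R` together with `y1` and `y2`. -/
  gen : Algebra.adjoin k (Set.range ι ∪ {y1, y2}) = ⊤
  /-- the defining relation `y₂y₁ = p₁₂y₁y₂ + p₁₁y₁² + τ₁y₁ + τ₂y₂ + τ₀`. -/
  rel : y2 * y1 =
    p12 • (y1 * y2) + p11 • (y1 ^ 2) + ι t1 * y1 + ι t2 * y2 + ι t0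
  /-- `B` is spanned as a left `R`-module by the monomials `y1^i * y2^j`. -/
  span : ∀ b : B, ∃ c : (ℕ × ℕ) →₀ R,
    b = c.sum fun ij r => ι r * (y1 ^ ij.1 * y2 ^ ij.2)
  /-- the monomials `y1^i * y2^j` are left `R`-linearly independent. -/
  indep : ∀ c : (ℕ × ℕ) →₀ R,
    (c.sum fun ij r => ι r * (y1 ^ ij.1 * y2 ^ ij.2)) = 0 → c = 0
  s11_lin : IsLinearMap k s11
  s12_lin : IsLinearMap k s12
  s21_lin : IsLinearMap k s21
  s22_lin : IsLinearMap k s22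
  d1_lin : IsLinearMap k d1
  d2_lin : IsLinearMap k d2
  /-- `σ` is unital. -/
  s11_one : s11 1 = 1
  s12_one : s12 1 = 0
  s21_one : s21 1 = 0
  s22_one : s22 1 = 1
  /-- `σ` is multiplicative (entrywise form of `σ(rr') = σ(r)σ(r')`). -/
  s11_mul : ∀ r r' : R, s11 (r * r') = s11 r * s11 r' + s12 r * s21 r'
  s12_mul : ∀ r r' : R, s12 (r * r') = s11 r * s12 r' + s12 r * s22 r'
  s21_mul : ∀ r r' : R, s21 (r * r') = s21 r * s11 r' + s22 r * s21 r'
  s22_mul : ∀ r r' : R, s22 (r * r') = s21 r * s12 r' + s22 r * s22 r'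
  /-- `δ` is a `σ`-derivation: `δ(rr') = σ(r)δ(r') + δ(r)r'` (entrywise). -/
  d1_mul : ∀ r r' : R, d1 (r * r') = s11 r * d1 r' + s12 r * d2 r' + d1 r * r'
  d2_mul : ∀ r r' : R, d2 (r * r') = s21 r * d1 r' + s22 r * d2 r' + d2 r * r'
  /-- `y₁r = σ₁₁(r)y₁ + σ₁₂(r)y₂ + δ₁(r)`. -/
  comm1 : ∀ r : R, y1 * ι r = ι (s11 r) * y1 + ι (s12 r) * y2 + ι (d1 r)
  /-- `y₂r = σ₂₁(r)y₁ + σ₂₂(r)y₂ + δ₂(r)`. -/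
  comm2 : ∀ r : R, y2 * ι r = ι (s21 r) * y1 + ι (s22 r) * y2 + ι (d2 r)

/-- `(q₁, q₂)` is a dcv-matrix with respect to the primed data
`(p'₁₂, p'₁₁; τ'₀, τ'₁, τ'₂; σ', δ')`. -/
def RightDoubleOre.IsDcv {k R B : Type*} [Field k] [Ring R] [Algebra k R]
    [Ring B] [Algebra k B] (E : RightDoubleOre k R B)
    (p12' p11' : k) (t0' t1' t2' : R)
    (s11' s12' s21' s22' d1' d2' : R → R) (q1 q2 : B) : Prop :=
  q2 * q1 = p12' • (q1 * q2) + p11' • (q1 ^ 2) +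
      E.ι t1' * q1 + E.ι t2' * q2 + E.ι t0' ∧
  (∀ r : R, q1 * E.ι r = E.ι (s11' r) * q1 + E.ι (s12' r) * q2 + E.ι (d1' r)) ∧
  (∀ r : R, q2 * E.ι r = E.ι (s21' r) * q1 + E.ι (s22' r) * q2 + E.ι (d2' r))

variable {k R B : Type*} [Field k] [Ring R] [Algebra k R] [Ring B] [Algebra k B]

/-- with `σ₁₂ = σ₂₁ = 0` and `σ₁₁∘δ₁ = −δ₁∘σ₁₁`, the pair
`(a₂y₁² + a₀, c)` is a dcv-matrix for the indicated primed data. -/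
theorem dcv_quadratic
    (E : RightDoubleOre k R B)
    (hs12 : ∀ r : R, E.s12 r = 0) (hs21 : ∀ r : R, E.s21 r = 0)
    (hanti : ∀ r : R, E.s11 (E.d1 r) = - E.d1 (E.s11 r))
    (u : Rˣ) (a0 c : R) (s22' : R → R) :
    E.IsDcv 0 0 0 c 0
      (fun r => (u : R) * E.s11 (E.s11 r) * (↑u⁻¹ : R))
      (fun _ => 0) (fun _ => 0) s22'
      (fun r => (u : R) * E.d1 (E.d1 r) + a0 * r -
        ((u : R) * E.s11 (E.s11 r) * (↑u⁻¹ : R)) * a0)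
      (fun r => c * r - s22' r * c)
      (E.ι (u : R) * E.y1 ^ 2 + E.ι a0) (E.ι c) := by
  have key : ∀ r : R, E.y1 ^ 2 * E.ι r =
      E.ι (E.s11 (E.s11 r)) * E.y1 ^ 2 + E.ι (E.d1 (E.d1 r)) := by
    intro r
    have h1 := E.comm1 r
    have h2 := E.comm1 (E.s11 r)
    have h3 := E.comm1 (E.d1 r)
    rw [hs12] at h1 h2 h3
    simp only [map_zero, zero_mul, add_zero] at h1 h2 h3
    calc E.y1 ^ 2 * E.ι r = E.y1 * (E.y1 * E.ι r) := by noncomm_ring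
    _ = E.y1 * (E.ι (E.s11 r) * E.y1) + E.y1 * E.ι (E.d1 r) := by
        rw [h1]; noncomm_ring
    _ = (E.ι (E.s11 (E.s11 r)) * E.y1 + E.ι (E.d1 (E.s11 r))) * E.y1
        + (E.ι (E.s11 (E.d1 r)) * E.y1 + E.ι (E.d1 (E.d1 r))) := by
        rw [← mul_assoc, h2, h3]
    _ = _ := by rw [hanti]; simp only [map_neg]; noncomm_ring
  refine ⟨?_, ?_, ?_⟩
  · simp
  · intro r
    have hu : (u : R) * E.s11 (E.s11 r) * (↑u⁻¹ : R) * (u : R)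
        = (u : R) * E.s11 (E.s11 r) := by
      rw [mul_assoc, Units.inv_mul, mul_one]
    have hιu : E.ι ((u : R) * E.s11 (E.s11 r) * (↑u⁻¹ : R)) * E.ι (u : R)
        = E.ι (u : R) * E.ι (E.s11 (E.s11 r)) := by
      rw [← map_mul, hu, map_mul]
    calc (E.ι (u : R) * E.y1 ^ 2 + E.ι a0) * E.ι r
        = E.ι (u : R) * (E.y1 ^ 2 * E.ι r) + E.ι a0 * E.ι r := by noncomm_ring
      _ = E.ι (u : R) * E.ι (E.s11 (E.s11 r)) * E.y1 ^ 2
          + E.ι (u : R) * E.ι (E.d1 (E.d1 r)) + E.ι (a0 * r) := by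
          rw [key, map_mul]; noncomm_ring
      _ = _ := by
          rw [← hιu]
          simp only [map_zero, zero_mul, add_zero, map_add, map_sub, map_mul]
          noncomm_ring
  · intro r
    simp only [map_zero, zero_mul, zero_add, map_sub, map_mul, ← map_mul]
    abel
end

section
/- Let B be a right double Ore extension of R with σ₁₂ = 0 and σ₁₁∘δ₁ = −δ₁∘σ₁₁. Let a₂, a₁, a₀, c ∈ R and set q₁ = a₂y₁² + a₁y₁ + a₀ and q₂ = c. Let σ'₁₁ : R → R be a map satisfying a₂σ₁₁(σ₁₁(r)) = σ'₁₁(r)a₂ and a₁σ₁₁(r) = σ'₁₁(r)a₁ for all r ∈ R (the condition f(y₁)σ₁₁(−) = σ'₁₁(−)f(y₁) for f(y₁) = a₂y₁ + a₁), set σ'₁₂ = σ'₂₁ = 0, let σ'₂₂ : R → R be any map, and define δ'₁(r) = a₂δ₁(δ₁(r)) + a₁δ₁(r) + a₀r − σ'₁₁(r)a₀ and δ'₂(r) = cr − σ'₂₂(r)c. Then (q₁, q₂) is a dcv-matrix with respect to (σ', δ') for the parameters p'₁₂ = p'₁₁ = 0, τ'₁ = c, τ'₂ = τ'₀ = 0;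 explicitly, q₂q₁ = cq₁, and for every r ∈ R, q₁r = σ'₁₁(r)q₁ + δ'₁(r) and q₂r = σ'₂₂(r)q₂ + δ'₂(r). -/
variable {k R B : Type*} [Field k] [Ring R] [Algebra k R] [Ring B] [Algebra k B]

/-- with `σ₁₂ = 0`, `σ₁₁∘δ₁ = −δ₁∘σ₁₁` and a map `σ'₁₁`
intertwining `a₂, a₁` with `σ₁₁², σ₁₁`, the pair `(a₂y₁² + a₁y₁ + a₀, c)` is
a dcv-matrix for the indicated primed data. -/
theorem dcv_quadratic_general
    (E : RightDoubleOre k R B)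
    (hs12 : ∀ r : R, E.s12 r = 0)
    (hanti : ∀ r : R, E.s11 (E.d1 r) = - E.d1 (E.s11 r))
    (a2 a1 a0 c : R) (s11' s22' : R → R)
    (h2 : ∀ r : R, a2 * E.s11 (E.s11 r) = s11' r * a2)
    (h1 : ∀ r : R, a1 * E.s11 r = s11' r * a1) :
    E.IsDcv 0 0 0 c 0
      s11' (fun _ => 0) (fun _ => 0) s22'
      (fun r => a2 * E.d1 (E.d1 r) + a1 * E.d1 r + a0 * r - s11' r * a0)
      (fun r => c * r - s22' r * c)
      (E.ι a2 * E.y1 ^ 2 + E.ι a1 * E.y1 + E.ι a0) (E.ι c) := by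
  constructor
  · simp
  refine ⟨fun r => ?_, fun r => ?_⟩
  · have hc1 : ∀ x : R, E.y1 * E.ι x = E.ι (E.s11 x) * E.y1 + E.ι (E.d1 x) := by
      intro x; rw [E.comm1 x, hs12, map_zero, zero_mul, add_zero]
    have hc2 : E.y1 ^ 2 * E.ι r
        = E.ι (E.s11 (E.s11 r)) * E.y1 ^ 2 + E.ι (E.d1 (E.d1 r)) := by
      have h : E.y1 ^ 2 * E.ι r = E.y1 * (E.y1 * E.ι r) := by rw [sq, mul_assoc]
      rw [h, hc1, mul_add, ← mul_assoc, hc1, hc1, hanti, map_neg]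
      noncomm_ring
    simp only [map_zero, zero_mul, add_zero]
    rw [add_mul, add_mul, mul_assoc, hc2, mul_assoc, hc1]
    simp only [mul_add, ← mul_assoc, ← map_mul, h1, h2, map_sub, map_add]
    noncomm_ring
  · simp only [map_zero, zero_mul, zero_add, map_sub, ← map_mul]
    noncomm_ring
end

section
/- Let B be a right double Ore extension of R with σ₂₁ = 0 and σ₂₂ = id_R. Let d ∈ R be central in R, let b₁ be a unit of R that is central in R, and let b₀ ∈ R; set q₁ = d and q₂ = b₁y₂ + b₀. Let σ'₁₁ : R → R be any map, set σ'₁₂ = σ'₂₁ = 0 and σ'₂₂ = id_R, and define δ'₁(r) = dr − σ'₁₁(r)d and δ'₂(r) = b₁δ₂(r) + b₀r − rb₀. Then (q₁, q₂) is a dcv-matrix with respect to (σ', δ') for the parameters p'₁₂ = 1, p'₁₁ = 0, τ'₁ = τ'₂ = 0, τ'₀ = b₁δ₂(d); explicitly, q₂q₁ = q₁q₂ + b₁δ₂(d), and for every r ∈ R, q₁r = σ'₁₁(r)q₁ + δ'₁(r) and q₂r = rq₂ + δ'₂(r). -/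
variable {k R B : Type*} [Field k] [Ring R] [Algebra k R] [Ring B] [Algebra k B]

/-- with `σ₂₁ = 0`, `σ₂₂ = id`, a central `d`, a central unit
`b₁` and `b₀ ∈ R`, the pair `(d, b₁y₂ + b₀)` is a dcv-matrix for
`p'₁₂ = 1`, `τ'₀ = b₁δ₂(d)` and the indicated primed maps. -/
theorem dcv_constant_linear
    (E : RightDoubleOre k R B)
    (hs21 : ∀ r : R, E.s21 r = 0)
    (hs22 : ∀ r : R, E.s22 r = r)
    (d : R) (hd : ∀ x : R, d * x = x * d)
    (b1 : Rˣ) (hb1 : ∀ x : R, (b1 : R) * x = x * (b1 : R))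
    (b0 : R) (s11' : R → R) :
    E.IsDcv 1 0 ((b1 : R) * E.d2 d) 0 0
      s11' (fun _ => 0) (fun _ => 0) (fun r => r)
      (fun r => d * r - s11' r * d)
      (fun r => (b1 : R) * E.d2 r + b0 * r - r * b0)
      (E.ι d) (E.ι (b1 : R) * E.y2 + E.ι b0) := by
  have key : ∀ x : R, E.ι (b1 : R) * E.ι x = E.ι x * E.ι (b1 : R) := fun x => by
    rw [← map_mul, ← map_mul, hb1]
  have keyd : ∀ x : R, E.ι d * E.ι x = E.ι x * E.ι d := fun x => by
    rw [← map_mul, ← map_mul, hd]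
  refine ⟨?_, fun r => ?_, fun r => ?_⟩
  · have h := E.comm2 d
    rw [hs21, hs22] at h
    simp only [one_smul, zero_smul, map_zero, map_mul]
    rw [add_mul, mul_assoc, h]
    simp only [map_zero, zero_mul, zero_add, add_zero, mul_add, ← mul_assoc]
    rw [key d, ← keyd b0]
    noncomm_ring
  · simp only [map_zero, map_sub, map_mul, zero_mul]
    noncomm_ring
  · have h := E.comm2 r
    rw [hs21 r, hs22 r] at h
    simp only [map_zero, zero_mul, map_add, map_sub, map_mul]
    rw [add_mul, mul_assoc, h]
    simp only [map_zero, zero_mul, zero_add, add_zero, mul_add, ← mul_assoc]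
    rw [key r]
    noncomm_ring
end

section
/- Let B be a trimmed right double Ore extension of R (i.e., δ₁ = δ₂ = 0 and τ₀ = τ₁ = τ₂ = 0), and suppose σ₁₁∘σ₁₂ = σ₁₂∘σ₁₁ = σ₂₂∘σ₂₁ = σ₂₁∘σ₂₂ = 0. Let n ≥ 1 and a₁, …, aₙ ∈ R, set q₁ = Σ_{i=1}^n aᵢy₁^i and q₂ = Σ_{i=1}^n aᵢy₂^i, and let σ'₁₁, σ'₁₂, σ'₂₁, σ'₂₂ : R → R be maps satisfying aᵢ·σ_{pq}^i(r) = σ'_{pq}(r)·aᵢ for all r ∈ R, all 1 ≤ i ≤ n and all p, q ∈ {1, 2}, where σ_{pq}^i is the i-fold composite of σ_{pq}. Then for every r ∈ R, q₁r = σ'₁₁(r)q₁ + σ'₁₂(r)q₂ and q₂r = σ'₂₁(r)q₁ + σ'₂₂(r)q₂; in particular, if in addition q₂q₁ = p'₁₂q₁q₂ + p'₁₁q₁² for scalars p'₁₂, p'₁₁ ∈ k, then (q₁, q₂) is a dcv-matrix with respect to (σ', δ' = 0) with τ'₀ = τ'₁ = τ'₂ = 0. -/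
variable {k R B : Type*} [Field k] [Ring R] [Algebra k R] [Ring B] [Algebra k B]

open Finset in
/-- for a trimmed double Ore extension with the composite
conditions `σ₁₁σ₁₂ = σ₁₂σ₁₁ = σ₂₂σ₂₁ = σ₂₁σ₂₂ = 0`, the pair
`(Σ aᵢy₁^i, Σ aᵢy₂^i)` satisfies the dcv commutation conditions whenever the
intertwining relations `aᵢσ_{pq}^i(r) = σ'_{pq}(r)aᵢ` hold; in particular it
is a dcv-matrix if additionally `q₂q₁ = p'₁₂q₁q₂ + p'₁₁q₁²`. -/
theorem trimmed_dcv_of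
    (E : RightDoubleOre k R B)
    (hd1 : ∀ r : R, E.d1 r = 0) (hd2 : ∀ r : R, E.d2 r = 0)
    (ht0 : E.t0 = 0) (ht1 : E.t1 = 0) (ht2 : E.t2 = 0)
    (hc1 : ∀ r : R, E.s11 (E.s12 r) = 0)
    (hc2 : ∀ r : R, E.s12 (E.s11 r) = 0)
    (hc3 : ∀ r : R, E.s22 (E.s21 r) = 0)
    (hc4 : ∀ r : R, E.s21 (E.s22 r) = 0)
    (n : ℕ) (hn : 1 ≤ n) (a : ℕ → R) (q1 q2 : B)
    (hq1 : q1 = ∑ i ∈ Icc 1 n, E.ι (a i) * E.y1 ^ i)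
    (hq2 : q2 = ∑ i ∈ Icc 1 n, E.ι (a i) * E.y2 ^ i)
    (s11' s12' s21' s22' : R → R)
    (h11 : ∀ i, 1 ≤ i → i ≤ n → ∀ r : R, a i * E.s11^[i] r = s11' r * a i)
    (h12 : ∀ i, 1 ≤ i → i ≤ n → ∀ r : R, a i * E.s12^[i] r = s12' r * a i)
    (h21 : ∀ i, 1 ≤ i → i ≤ n → ∀ r : R, a i * E.s21^[i] r = s21' r * a i)
    (h22 : ∀ i, 1 ≤ i → i ≤ n → ∀ r : R, a i * E.s22^[i] r = s22' r * a i) :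
    (∀ r : R, q1 * E.ι r = E.ι (s11' r) * q1 + E.ι (s12' r) * q2) ∧
    (∀ r : R, q2 * E.ι r = E.ι (s21' r) * q1 + E.ι (s22' r) * q2) ∧
    (∀ p12' p11' : k, q2 * q1 = p12' • (q1 * q2) + p11' • (q1 ^ 2) →
      E.IsDcv p12' p11' 0 0 0 s11' s12' s21' s22'
        (fun _ => 0) (fun _ => 0) q1 q2) := by
  have key1 : ∀ i, 1 ≤ i → ∀ r : R, E.y1 ^ i * E.ι r =
      E.ι (E.s11^[i] r) * E.y1 ^ i + E.ι (E.s12^[i] r) * E.y2 ^ i := by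
    intro i hi
    induction i, hi using Nat.le_induction with
    | base => intro r; simpa [hd1 r] using E.comm1 r
    | succ i hi ih =>
      intro r
      obtain ⟨j, rfl⟩ := Nat.exists_eq_succ_of_ne_zero (Nat.one_le_iff_ne_zero.mp hi)
      have z1 : E.s12 (E.s11^[j+1] r) = 0 := by
        rw [Function.iterate_succ_apply']; exact hc2 _
      have z2 : E.s11 (E.s12^[j+1] r) = 0 := by
        rw [Function.iterate_succ_apply']; exact hc1 _
      rw [Function.iterate_succ_apply' E.s11 (j+1), Function.iterate_succ_apply' E.s12 (j+1),
        pow_succ' E.y1 (j+1), mul_assoc, ih r, mul_add, ← mul_assoc, ← mul_assoc,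
        E.comm1, E.comm1, hd1, hd1, z1, z2]
      simp [add_mul, mul_assoc, pow_succ']
  have key2 : ∀ i, 1 ≤ i → ∀ r : R, E.y2 ^ i * E.ι r =
      E.ι (E.s21^[i] r) * E.y1 ^ i + E.ι (E.s22^[i] r) * E.y2 ^ i := by
    intro i hi
    induction i, hi using Nat.le_induction with
    | base => intro r; simpa [hd2 r] using E.comm2 r
    | succ i hi ih =>
      intro r
      obtain ⟨j, rfl⟩ := Nat.exists_eq_succ_of_ne_zero (Nat.one_le_iff_ne_zero.mp hi)
      have z1 : E.s22 (E.s21^[j+1] r) = 0 := by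
        rw [Function.iterate_succ_apply']; exact hc3 _
      have z2 : E.s21 (E.s22^[j+1] r) = 0 := by
        rw [Function.iterate_succ_apply']; exact hc4 _
      rw [Function.iterate_succ_apply' E.s21 (j+1), Function.iterate_succ_apply' E.s22 (j+1),
        pow_succ' E.y2 (j+1), mul_assoc, ih r, mul_add, ← mul_assoc, ← mul_assoc,
        E.comm2, E.comm2, hd2, hd2, z1, z2]
      simp [add_mul, mul_assoc, pow_succ']
  have P1 : ∀ r : R, q1 * E.ι r = E.ι (s11' r) * q1 + E.ι (s12' r) * q2 := by
    intro r
    rw [hq1, hq2, sum_mul, mul_sum, mul_sum, ← sum_add_distrib]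
    refine sum_congr rfl fun i hi => ?_
    rw [mem_Icc] at hi
    rw [mul_assoc, key1 i hi.1 r, mul_add, ← mul_assoc, ← mul_assoc,
      ← map_mul, ← map_mul, h11 i hi.1 hi.2 r, h12 i hi.1 hi.2 r,
      map_mul, map_mul, mul_assoc, mul_assoc]
  have P2 : ∀ r : R, q2 * E.ι r = E.ι (s21' r) * q1 + E.ι (s22' r) * q2 := by
    intro r
    rw [hq2, hq1, sum_mul, mul_sum, mul_sum, ← sum_add_distrib]
    refine sum_congr rfl fun i hi => ?_
    rw [mem_Icc] at hi
    rw [mul_assoc, key2 i hi.1 r, mul_add, ← mul_assoc, ← mul_assoc,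
      ← map_mul, ← map_mul, h21 i hi.1 hi.2 r, h22 i hi.1 hi.2 r,
      map_mul, map_mul, mul_assoc, mul_assoc]
  refine ⟨P1, P2, fun p12' p11' hrel => ⟨?_, fun r => ?_, fun r => ?_⟩⟩
  · simp [hrel]
  · simpa using P1 r
  · simpa using P2 r
end
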